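/- For positive integers $n_1, n_2$ and $1 \leq k \leq \min(n_1,n_2)$, there holds $\binom{n_1+n_2}{n_1+k}_q \binom{n_1+n_2}{n_2+k}_q = \sum_{s=0}^{n_1-k} \frac{q^{s^2+2ks} (q;q)_{n_1+n_2}}{(q;q)_s (q;q)_{s+2k} (q;q)_{n_1-k-s} (q;q)_{n_2-k-s}}$, where terms with $n_2 - k - s < 0$ are interpreted as $0$. -/

import Mathlib

open Polynomial Finset

/-- The `q`-integer `[n] = 1 + q + ⋯ + q^(n-1)` as a polynomial in `ℤ[q]`. -/
noncomputable def qint (n : ℕ) : Polynomial ℤ := ∑ i ∈ Finset.range n, Polynomial.X ^ i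

/-- The Gaussian binomial coefficient `[n choose k]_q` in `ℤ[q]`, via the `q`-Pascal rule. -/
noncomputable def qbinom : ℕ → ℕ → Polynomial ℤ
  | _, 0 => 1
  | 0, _ + 1 => 0
  | n + 1, k + 1 => qbinom n k + Polynomial.X ^ (k + 1) * qbinom n (k + 1)

/-- The `q`-factorial `(q;q)_n = (1-q)(1-q²)⋯(1-qⁿ)` in `ℤ[q]`. -/
noncomputable def qfac (n : ℕ) : Polynomial ℤ :=
  ∏ i ∈ Finset.range n, (1 - Polynomial.X ^ (i + 1))

/-!
Write `n₁ = a + k`, `n₂ = b + k`. By symmetry `[a+2k+b, b+2k] = [a+2k+b, a]`, and the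
`q`-Vandermonde identity splits `[(a+2k)+b, a]` as `∑ₛ q^((2k+s)s) [a+2k, a-s] [b, s]`.
Multiplying by `[a+2k+b, a+2k]` and writing every Gaussian binomial as a quotient of
`q`-factorials telescopes each summand into the one on the right. The quotients make sense
whenever `q` is not a root of unity, in particular for `q` transcendental.
-/

@[simp]
lemma qbinom_zero_right (n : ℕ) : qbinom n 0 = 1 := by cases n <;> rfl

lemma qbinom_succ_succ (n k : ℕ) :
    qbinom (n + 1) (k + 1) = qbinom n k + X ^ (k + 1) * qbinom n (k + 1) := rfl

lemma qbinom_eq_zero_of_lt {n k : ℕ} (h : n < k) : qbinom n k = 0 := by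
  induction n generalizing k with
  | zero => obtain ⟨k, rfl⟩ := Nat.exists_eq_add_of_lt h; rfl
  | succ n ih =>
    obtain ⟨k, rfl⟩ : ∃ j, k = j + 1 := ⟨k - 1, by omega⟩
    rw [qbinom_succ_succ, ih (by omega), ih (by omega), mul_zero, add_zero]

@[simp]
lemma qbinom_self (n : ℕ) : qbinom n n = 1 := by
  induction n with
  | zero => rfl
  | succ n ih => rw [qbinom_succ_succ, ih, qbinom_eq_zero_of_lt n.lt_succ_self, mul_zero, add_zero]

@[simp]
lemma qfac_zero : qfac 0 = 1 := rfl

lemma qfac_succ (n : ℕ) : qfac (n + 1) = qfac n * (1 - X ^ (n + 1)) :=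
  prod_range_succ _ _

lemma qbinom_mul_qfac_mul_qfac {n k : ℕ} (h : k ≤ n) :
    qbinom n k * qfac k * qfac (n - k) = qfac n := by
  induction n generalizing k with
  | zero => simp [Nat.le_zero.mp h]
  | succ n ih =>
    rcases k with _ | k
    · simp
    rcases h.eq_or_lt with h | h
    · simp [Nat.succ_inj.mp h]
    obtain ⟨d, rfl⟩ := Nat.exists_eq_add_of_le (Nat.le_of_lt_succ h)
    have h₁ := ih (k := k) (by omega)
    have h₂ := ih (k := k + 1) (by omega)
    rw [show k + 1 + d - k = d + 1 by omega, qfac_succ d] at h₁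
    rw [show k + 1 + d - (k + 1) = d by omega, qfac_succ k] at h₂
    rw [show k + 1 + d + 1 - (k + 1) = d + 1 by omega, qbinom_succ_succ, qfac_succ (k + 1 + d),
      qfac_succ d, qfac_succ k]
    linear_combination (1 - (X : ℤ[X]) ^ (k + 1)) * h₁ +
      (X : ℤ[X]) ^ (k + 1) * (1 - (X : ℤ[X]) ^ (d + 1)) * h₂

/-- The `q`-Vandermonde identity. -/
theorem qbinom_add (m n r : ℕ) :
    qbinom (m + n) r =
      ∑ p ∈ antidiagonal r, X ^ ((m - p.1) * p.2) * qbinom m p.1 * qbinom n p.2 := by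
  induction m generalizing r with
  | zero =>
    rw [Nat.sum_antidiagonal_eq_sum_range_succ_mk, sum_range_succ']
    simp [qbinom_eq_zero_of_lt]
  | succ m ih =>
    rcases r with _ | r
    · simp
    have shift (i j : ℕ) : (X : ℤ[X]) ^ ((m - i) * j) * X ^ (i + 1) * qbinom m (i + 1) =
        X ^ (i + j + 1) * X ^ ((m - (i + 1)) * j) * qbinom m (i + 1) := by
      rcases lt_or_ge m (i + 1) with h | h
      · simp [qbinom_eq_zero_of_lt h]
      obtain ⟨d, rfl⟩ := Nat.exists_eq_add_of_le h
      rw [show i + 1 + d - i = d + 1 by omega, Nat.add_sub_cancel_left, ← pow_add, ← pow_add]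
      ring_nf
    have pascal : ∑ p ∈ antidiagonal r,
          X ^ ((m + 1 - (p.1 + 1)) * p.2) * qbinom (m + 1) (p.1 + 1) * qbinom n p.2 =
        ∑ p ∈ antidiagonal r, X ^ ((m - p.1) * p.2) * qbinom m p.1 * qbinom n p.2 +
          X ^ (r + 1) * ∑ p ∈ antidiagonal r,
            X ^ ((m - (p.1 + 1)) * p.2) * qbinom m (p.1 + 1) * qbinom n p.2 := by
      rw [mul_sum, ← sum_add_distrib]
      refine sum_congr rfl fun p hp => ?_
      rw [← mem_antidiagonal.mp hp, Nat.add_sub_add_right, qbinom_succ_succ]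
      linear_combination qbinom n p.2 * shift p.1 p.2
    rw [Nat.add_right_comm, qbinom_succ_succ, ih, ih, Nat.sum_antidiagonal_succ,
      Nat.sum_antidiagonal_succ]
    simp only [pascal, Nat.sub_zero, qbinom_zero_right]
    ring

lemma qbinom_add_add_left_eq_sum (a b c : ℕ) :
    qbinom (a + c + b) a =
      ∑ s ∈ range (a + 1), X ^ ((c + s) * s) * qbinom (a + c) (a - s) * qbinom b s := by
  rw [qbinom_add, ← Nat.sum_antidiagonal_swap, Nat.sum_antidiagonal_eq_sum_range_succ_mk]
  refine sum_congr rfl fun s hs => ?_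
  rw [Prod.swap_prod_mk, show a + c - (a - s) = c + s by grind]

lemma RatFunc.not_isOfFinOrder_X {K : Type*} [Field K] :
    ¬IsOfFinOrder (RatFunc.X : RatFunc K) := by
  rw [isOfFinOrder_iff_pow_eq_one]
  rintro ⟨n, hn, h⟩
  rw [← RatFunc.algebraMap_X, ← map_pow, ← map_one (algebraMap K[X] (RatFunc K)),
    (RatFunc.algebraMap_injective K).eq_iff] at h
  simpa [hn.ne'] using congrArg natDegree h

section NotRootOfUnity

variable {K : Type*} [Field K] {q : K}

lemma aeval_qfac_ne_zero (hq : ¬IsOfFinOrder q) (n : ℕ) : aeval q (qfac n) ≠ 0 := by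
  simp only [qfac, map_prod, map_sub, map_one, map_pow, aeval_X]
  exact prod_ne_zero_iff.mpr fun i _ => sub_ne_zero.mpr fun h =>
    hq (isOfFinOrder_iff_pow_eq_one.mpr ⟨i + 1, i.succ_pos, h.symm⟩)

lemma aeval_qbinom (hq : ¬IsOfFinOrder q) {n k : ℕ} (h : k ≤ n) :
    aeval q (qbinom n k) = aeval q (qfac n) / (aeval q (qfac k) * aeval q (qfac (n - k))) := by
  rw [eq_div_iff (mul_ne_zero (aeval_qfac_ne_zero hq _) (aeval_qfac_ne_zero hq _)), ← map_mul,
    ← map_mul, ← mul_assoc, qbinom_mul_qfac_mul_qfac h]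

theorem aeval_qbinom_mul_qbinom (hq : ¬IsOfFinOrder q) {n₁ n₂ k : ℕ} (hk₁ : k ≤ n₁)
    (hk₂ : k ≤ n₂) :
    aeval q (qbinom (n₁ + n₂) (n₁ + k)) * aeval q (qbinom (n₁ + n₂) (n₂ + k)) =
      ∑ s ∈ range (n₁ - k + 1),
        if s ≤ n₂ - k then
          q ^ (s ^ 2 + 2 * k * s) * aeval q (qfac (n₁ + n₂)) /
            (aeval q (qfac s) * aeval q (qfac (s + 2 * k)) * aeval q (qfac (n₁ - k - s)) *
              aeval q (qfac (n₂ - k - s)))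
        else 0 := by
  obtain ⟨a, rfl⟩ := Nat.exists_eq_add_of_le' hk₁
  obtain ⟨b, rfl⟩ := Nat.exists_eq_add_of_le' hk₂
  have hq' := aeval_qfac_ne_zero hq
  have symm :
      aeval q (qbinom (a + 2 * k + b) (b + 2 * k)) = aeval q (qbinom (a + 2 * k + b) a) := by
    rw [aeval_qbinom hq (by omega), aeval_qbinom hq (by omega),
      show a + 2 * k + b - a = b + 2 * k by omega, show a + 2 * k + b - (b + 2 * k) = a by omega]
    ring
  rw [Nat.add_sub_cancel, Nat.add_sub_cancel, show a + k + (b + k) = a + 2 * k + b by ring,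
    show a + k + k = a + 2 * k by ring, show b + k + k = b + 2 * k by ring, symm,
    qbinom_add_add_left_eq_sum, map_sum, mul_sum]
  refine sum_congr rfl fun s hs => ?_
  split_ifs with hsb
  · have hsa : s ≤ a := Nat.lt_succ_iff.mp (mem_range.mp hs)
    rw [map_mul, map_mul, map_pow, aeval_X, aeval_qbinom hq (by omega),
      aeval_qbinom hq (by omega), aeval_qbinom hq hsb,
      show a + 2 * k + b - (a + 2 * k) = b by omega, show a + 2 * k - (a - s) = s + 2 * k by omega,
      show (2 * k + s) * s = s ^ 2 + 2 * k * s by ring]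
    field_simp [hq' (a + 2 * k), hq' b]
  · simp [qbinom_eq_zero_of_lt (not_le.mp hsb)]

end NotRootOfUnity

theorem stmt_8_general (n₁ n₂ k : ℕ)
    (hk₁ : k ≤ n₁) (hk₂ : k ≤ n₂) :
    Polynomial.aeval (RatFunc.X : RatFunc ℚ) (qbinom (n₁ + n₂) (n₁ + k)) *
        Polynomial.aeval (RatFunc.X : RatFunc ℚ) (qbinom (n₁ + n₂) (n₂ + k))
      = ∑ s ∈ Finset.range (n₁ - k + 1),
          if s ≤ n₂ - k then
            (RatFunc.X : RatFunc ℚ) ^ (s ^ 2 + 2 * k * s) *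
                Polynomial.aeval (RatFunc.X : RatFunc ℚ) (qfac (n₁ + n₂)) /
              (Polynomial.aeval (RatFunc.X : RatFunc ℚ) (qfac s) *
                Polynomial.aeval (RatFunc.X : RatFunc ℚ) (qfac (s + 2 * k)) *
                Polynomial.aeval (RatFunc.X : RatFunc ℚ) (qfac (n₁ - k - s)) *
                Polynomial.aeval (RatFunc.X : RatFunc ℚ) (qfac (n₂ - k - s)))
          else 0 := by
  -- `RatFunc ℚ` carries a `ℤ`-algebra structure through `ℚ` besides `Ring.toIntAlgebra`
  convert aeval_qbinom_mul_qbinom RatFunc.not_isOfFinOrder_X hk₁ hk₂ <;>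
    exact Subsingleton.elim _ _

theorem stmt_8 (n₁ n₂ k : ℕ) (hn₁ : 0 < n₁) (hn₂ : 0 < n₂) (hk1 : 1 ≤ k)
    (hk₁ : k ≤ n₁) (hk₂ : k ≤ n₂) :
    Polynomial.aeval (RatFunc.X : RatFunc ℚ) (qbinom (n₁ + n₂) (n₁ + k)) *
        Polynomial.aeval (RatFunc.X : RatFunc ℚ) (qbinom (n₁ + n₂) (n₂ + k))
      = ∑ s ∈ Finset.range (n₁ - k + 1),
          if s ≤ n₂ - k then
            (RatFunc.X : RatFunc ℚ) ^ (s ^ 2 + 2 * k * s) *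
                Polynomial.aeval (RatFunc.X : RatFunc ℚ) (qfac (n₁ + n₂)) /
              (Polynomial.aeval (RatFunc.X : RatFunc ℚ) (qfac s) *
                Polynomial.aeval (RatFunc.X : RatFunc ℚ) (qfac (s + 2 * k)) *
                Polynomial.aeval (RatFunc.X : RatFunc ℚ) (qfac (n₁ - k - s)) *
                Polynomial.aeval (RatFunc.X : RatFunc ℚ) (qfac (n₂ - k - s)))
          else 0 :=
  stmt_8_general n₁ n₂ k hk₁ hk₂
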